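/- TRO-equivalence of concrete operator systems is transitive: if S ⊆ B(H), T ⊆ B(K), R ⊆ B(L) are operator systems such that S is TRO-equivalent to T via a non-degenerate TRO M₁ ⊆ B(H,K) and T is TRO-equivalent to R via a non-degenerate TRO M₂ ⊆ B(K,L), then setting D to be the *-algebra generated by M₁ M₁* ∪ M₂* M₂ and M₃ the closed linear span of M₂ D M₁, the space M₃ is a TRO implementing a TRO-equivalence between S and R. -/

import Mathlib

open ContinuousLinearMap

/-- The set of products `a ∘L b` with `a ∈ A`, `b ∈ B`. -/
def opMulSet {H K L : Type*} [NormedAddCommGroup H] [NormedSpace ℂ H]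
    [NormedAddCommGroup K] [NormedSpace ℂ K] [NormedAddCommGroup L] [NormedSpace ℂ L]
    (A : Set (K →L[ℂ] L)) (B : Set (H →L[ℂ] K)) : Set (H →L[ℂ] L) :=
  {x | ∃ a ∈ A, ∃ b ∈ B, x = a ∘L b}

/-- The set of adjoints of elements of `M`. -/
noncomputable def opAdjSet {H K : Type*}
    [NormedAddCommGroup H] [InnerProductSpace ℂ H] [CompleteSpace H]
    [NormedAddCommGroup K] [InnerProductSpace ℂ K] [CompleteSpace K]
    (M : Set (H →L[ℂ] K)) : Set (K →L[ℂ] H) :=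
  {x | ∃ m ∈ M, x = adjoint m}

/-- Closed linear span. -/
def cSpan {E : Type*} [NormedAddCommGroup E] [NormedSpace ℂ E] (s : Set E) : Set E :=
  closure ((Submodule.span ℂ s : Submodule ℂ E) : Set E)

/-!
The whole proof runs through the closed span `[T]`. For a generator `m m'*` of `D` (`m, m' ∈ M₁`)
and `t ∈ [T]`, inserting `1 ∈ [M₁ M₁*]` gives `m m'* t ∈ [M₁ (M₁* T M₁) M₁*] ⊆ [M₁ S M₁*] ⊆ [T]`,
and likewise on the right and for the generators in `M₂* M₂`; since the generating set is
self-adjoint, `[T]` is a bimodule over the whole *-algebra `D`. Then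
`M₃* R M₃ ⊆ [M₁* D (M₂* R M₂) D M₁] ⊆ [M₁* [T] M₁] ⊆ [S]`. The ternary property is the identity
`(p d q)(p' d' q')*(p'' d'' q'') = p (d q q'* d'* p'* p'' d'') q''`, and non-degeneracy follows by
inserting the units `1 ∈ [M₁ M₁*]`, `1 ∈ [M₂* M₂]` into `1 ∈ [M₁* M₁]`.
-/

section ClosedSpan

variable {E F : Type*} [NormedAddCommGroup E] [NormedSpace ℂ E]
  [NormedAddCommGroup F] [NormedSpace ℂ F]

lemma cSpan_coe (V : Submodule ℂ E) : cSpan (V : Set E) = closure V := by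
  rw [cSpan, Submodule.span_eq]

lemma subset_cSpan (s : Set E) : s ⊆ cSpan s :=
  fun _ hx => subset_closure (Submodule.subset_span hx)

lemma cSpan_subset_cSpan {s t : Set E} (h : s ⊆ cSpan t) : cSpan s ⊆ cSpan t :=
  closure_minimal
    (Submodule.span_le (p := (Submodule.span ℂ t).topologicalClosure).2 h) isClosed_closure

lemma subset_cSpan_trans {s t u : Set E} (hst : s ⊆ cSpan t) (htu : t ⊆ cSpan u) :
    s ⊆ cSpan u :=
  hst.trans (cSpan_subset_cSpan htu)

lemma mapsTo_cSpan {σ : ℂ →+* ℂ} (f : E →SL[σ] F) {s : Set E} {t : Set F}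
    (h : Set.MapsTo f s (cSpan t)) : Set.MapsTo f (cSpan s) (cSpan t) := by
  have hspan : Submodule.span ℂ s ≤
      ((Submodule.span ℂ t).topologicalClosure).comap (f : E →ₛₗ[σ] F) :=
    Submodule.span_le.2 h
  exact closure_minimal hspan (isClosed_closure.preimage f.continuous)

end ClosedSpan

section OperatorProducts

variable {H K L G : Type*} [NormedAddCommGroup H] [NormedSpace ℂ H]
  [NormedAddCommGroup K] [NormedSpace ℂ K] [NormedAddCommGroup L] [NormedSpace ℂ L]
  [NormedAddCommGroup G] [NormedSpace ℂ G]

lemma comp_mem_opMulSet {A : Set (K →L[ℂ] L)} {B : Set (H →L[ℂ] K)} {a : K →L[ℂ] L}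
    {b : H →L[ℂ] K} (ha : a ∈ A) (hb : b ∈ B) : a ∘L b ∈ opMulSet A B :=
  ⟨a, ha, b, hb, rfl⟩

lemma forall_mem_opMulSet {A : Set (K →L[ℂ] L)} {B : Set (H →L[ℂ] K)}
    {P : (H →L[ℂ] L) → Prop} : (∀ x ∈ opMulSet A B, P x) ↔ ∀ a ∈ A, ∀ b ∈ B, P (a ∘L b) := by
  constructor
  · exact fun h a ha b hb => h _ (comp_mem_opMulSet ha hb)
  · rintro h _ ⟨a, ha, b, hb, rfl⟩
    exact h a ha b hb

lemma opMulSet_assoc (A : Set (L →L[ℂ] G)) (B : Set (K →L[ℂ] L)) (C : Set (H →L[ℂ] K)) :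
    opMulSet (opMulSet A B) C = opMulSet A (opMulSet B C) := by
  ext x
  constructor
  · rintro ⟨_, ⟨a, ha, b, hb, rfl⟩, c, hc, rfl⟩
    exact comp_mem_opMulSet ha (comp_mem_opMulSet hb hc)
  · rintro ⟨a, ha, _, ⟨b, hb, c, hc, rfl⟩, rfl⟩
    exact comp_mem_opMulSet (comp_mem_opMulSet ha hb) hc

lemma opMulSet_subset_cSpan {A A' : Set (K →L[ℂ] L)} {B B' : Set (H →L[ℂ] K)}
    (hA : A ⊆ cSpan A') (hB : B ⊆ cSpan B') : opMulSet A B ⊆ cSpan (opMulSet A' B') := by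
  have hleft : ∀ b ∈ B', Set.MapsTo (fun a => a ∘L b) (cSpan A') (cSpan (opMulSet A' B')) :=
    fun b hb => mapsTo_cSpan ((compL ℂ H K L).flip b)
      fun a ha => subset_cSpan _ (comp_mem_opMulSet ha hb)
  refine forall_mem_opMulSet.2 fun a ha b hb => ?_
  exact mapsTo_cSpan (compL ℂ H K L a) (fun b' hb' => hleft b' hb' (hA ha)) (hB hb)

lemma comp_mem_cSpan_opMulSet {A : Set (K →L[ℂ] L)} {B : Set (H →L[ℂ] K)} {a : K →L[ℂ] L}
    {b : H →L[ℂ] K} (ha : a ∈ cSpan A) (hb : b ∈ cSpan B) : a ∘L b ∈ cSpan (opMulSet A B) :=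
  opMulSet_subset_cSpan subset_rfl subset_rfl (comp_mem_opMulSet ha hb)

lemma one_mem_cSpan_opMulSet {A B : Set (H →L[ℂ] H)} (hA : 1 ∈ cSpan A) (hB : 1 ∈ cSpan B) :
    1 ∈ cSpan (opMulSet A B) := by
  simpa only [one_def, id_comp, comp_id] using comp_mem_cSpan_opMulSet hA hB

lemma subset_cSpan_opMulSet_left {X : Set (K →L[ℂ] K)} (h1 : 1 ∈ cSpan X)
    (A : Set (H →L[ℂ] K)) : A ⊆ cSpan (opMulSet X A) := fun a ha => by
  simpa only [one_def, id_comp, comp_id] using comp_mem_cSpan_opMulSet h1 (subset_cSpan A ha)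

end OperatorProducts

section Adjoints

variable {H K L : Type*} [NormedAddCommGroup H] [InnerProductSpace ℂ H] [CompleteSpace H]
  [NormedAddCommGroup K] [InnerProductSpace ℂ K] [CompleteSpace K]
  [NormedAddCommGroup L] [InnerProductSpace ℂ L] [CompleteSpace L]

lemma adjoint_mem_opAdjSet {M : Set (H →L[ℂ] K)} {m : H →L[ℂ] K} (hm : m ∈ M) :
    adjoint m ∈ opAdjSet M :=
  ⟨m, hm, rfl⟩

lemma forall_mem_opAdjSet {M : Set (H →L[ℂ] K)} {P : (K →L[ℂ] H) → Prop} :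
    (∀ x ∈ opAdjSet M, P x) ↔ ∀ m ∈ M, P (adjoint m) := by
  constructor
  · exact fun h m hm => h _ (adjoint_mem_opAdjSet hm)
  · rintro h _ ⟨m, hm, rfl⟩
    exact h m hm

@[simp]
lemma opAdjSet_opAdjSet (M : Set (H →L[ℂ] K)) : opAdjSet (opAdjSet M) = M := by
  ext x
  constructor
  · rintro ⟨_, ⟨m, hm, rfl⟩, rfl⟩
    rwa [adjoint_adjoint]
  · intro hx
    exact ⟨adjoint x, adjoint_mem_opAdjSet hx, (adjoint_adjoint x).symm⟩

lemma opAdjSet_opMulSet (A : Set (K →L[ℂ] L)) (B : Set (H →L[ℂ] K)) :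
    opAdjSet (opMulSet A B) = opMulSet (opAdjSet B) (opAdjSet A) := by
  ext x
  constructor
  · rintro ⟨_, ⟨a, ha, b, hb, rfl⟩, rfl⟩
    rw [adjoint_comp]
    exact comp_mem_opMulSet (adjoint_mem_opAdjSet hb) (adjoint_mem_opAdjSet ha)
  · rintro ⟨_, ⟨b, hb, rfl⟩, _, ⟨a, ha, rfl⟩, rfl⟩
    rw [← adjoint_comp]
    exact adjoint_mem_opAdjSet (comp_mem_opMulSet ha hb)

lemma opAdjSet_coe_nonUnitalStarSubalgebra (D : NonUnitalStarSubalgebra ℂ (H →L[ℂ] H)) :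
    opAdjSet (D : Set (H →L[ℂ] H)) = D := by
  ext x
  constructor
  · rintro ⟨d, hd, rfl⟩
    exact star_mem (s := D) hd
  · intro hx
    exact ⟨adjoint x, star_mem (s := D) hx, (adjoint_adjoint x).symm⟩

lemma star_eq_opAdjSet (s : Set (H →L[ℂ] H)) : star s = opAdjSet s := by
  ext x
  constructor
  · intro hx
    exact ⟨star x, hx, by rw [star_eq_adjoint, adjoint_adjoint]⟩
  · rintro ⟨m, hm, rfl⟩
    rwa [Set.mem_star, star_eq_adjoint, adjoint_adjoint]

lemma opAdjSet_mono {M M' : Set (H →L[ℂ] K)} (h : M ⊆ M') : opAdjSet M ⊆ opAdjSet M' :=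
  forall_mem_opAdjSet.2 fun _ hm => adjoint_mem_opAdjSet (h hm)

lemma opAdjSet_subset_cSpan {M M' : Set (H →L[ℂ] K)} (h : M ⊆ cSpan M') :
    opAdjSet M ⊆ cSpan (opAdjSet M') :=
  forall_mem_opAdjSet.2 fun _ hm =>
    mapsTo_cSpan
      (adjoint : (H →L[ℂ] K) ≃ₗᵢ⋆[ℂ] (K →L[ℂ] H)).toContinuousLinearEquiv.toContinuousLinearMap
      (fun _ hm' => subset_cSpan _ (adjoint_mem_opAdjSet hm')) (h hm)

lemma opAdjSet_opMulSet_opMulSet (A : Set (K →L[ℂ] L))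
    (D : NonUnitalStarSubalgebra ℂ (K →L[ℂ] K)) (B : Set (H →L[ℂ] K)) :
    opAdjSet (opMulSet A (opMulSet (D : Set (K →L[ℂ] K)) B)) =
      opMulSet (opAdjSet B) (opMulSet (D : Set (K →L[ℂ] K)) (opAdjSet A)) := by
  rw [opAdjSet_opMulSet, opAdjSet_opMulSet, opAdjSet_coe_nonUnitalStarSubalgebra, opMulSet_assoc]

end Adjoints

namespace Submodule

variable {R A : Type*} [CommSemiring R] [NonUnitalSemiring A] [Module R A]
  [IsScalarTower R A A] [SMulCommClass R A A]

def idealizer (V : Submodule R A) : NonUnitalSubalgebra R A where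
  carrier := {a | ∀ v ∈ V, a * v ∈ V ∧ v * a ∈ V}
  add_mem' {a b} ha hb v hv := by
    rw [add_mul, mul_add]
    exact ⟨V.add_mem (ha v hv).1 (hb v hv).1, V.add_mem (ha v hv).2 (hb v hv).2⟩
  zero_mem' v _ := by
    rw [zero_mul, mul_zero]
    exact ⟨V.zero_mem, V.zero_mem⟩
  mul_mem' {a b} ha hb v hv := by
    rw [mul_assoc, ← mul_assoc v]
    exact ⟨(ha _ (hb v hv).1).1, (hb _ (ha v hv).2).2⟩
  smul_mem' c a ha v hv := by
    rw [smul_mul_assoc, mul_smul_comm]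
    exact ⟨V.smul_mem c (ha v hv).1, V.smul_mem c (ha v hv).2⟩

end Submodule

lemma NonUnitalStarAlgebra.adjoin_subset {R A : Type*} [CommSemiring R] [StarRing R]
    [NonUnitalSemiring A] [StarRing A] [Module R A] [IsScalarTower R A A] [SMulCommClass R A A]
    [StarModule R A] {s : Set A} {P : NonUnitalSubalgebra R A} (hs : s ⊆ P)
    (hstar : star s ⊆ P) :
    (adjoin R s : Set A) ⊆ P :=
  NonUnitalAlgebra.adjoin_le (Set.union_subset hs hstar)

section TernaryRings

variable {H K L : Type*} [NormedAddCommGroup H] [InnerProductSpace ℂ H] [CompleteSpace H]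
  [NormedAddCommGroup K] [InnerProductSpace ℂ K] [CompleteSpace K]
  [NormedAddCommGroup L] [InnerProductSpace ℂ L] [CompleteSpace L]

lemma cSpan_ternary_closed {X : Set (H →L[ℂ] K)}
    (h : ∀ a ∈ X, ∀ b ∈ X, ∀ c ∈ X, a ∘L adjoint b ∘L c ∈ X) :
    ∀ a ∈ cSpan X, ∀ b ∈ cSpan X, ∀ c ∈ cSpan X, a ∘L adjoint b ∘L c ∈ cSpan X := by
  have hXXX : opMulSet X (opMulSet (opAdjSet X) X) ⊆ cSpan X := by
    simp only [Set.subset_def, forall_mem_opMulSet, forall_mem_opAdjSet]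
    exact fun a ha b hb c hc => subset_cSpan X (h a ha b hb c hc)
  intro a ha b hb c hc
  refine cSpan_subset_cSpan hXXX
    (opMulSet_subset_cSpan subset_rfl (opMulSet_subset_cSpan (opAdjSet_subset_cSpan subset_rfl)
      subset_rfl) ?_)
  exact comp_mem_opMulSet ha (comp_mem_opMulSet (adjoint_mem_opAdjSet hb) hc)

lemma opMulSet_opAdjSet_subset_idealizer {M : Set (H →L[ℂ] K)} {S : Set (H →L[ℂ] H)}
    {T : Set (K →L[ℂ] K)} (hS : opMulSet (opAdjSet M) (opMulSet T M) ⊆ cSpan S)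
    (hT : opMulSet M (opMulSet S (opAdjSet M)) ⊆ cSpan T)
    (h1 : 1 ∈ cSpan (opMulSet M (opAdjSet M))) :
    opMulSet M (opAdjSet M) ⊆ (Submodule.span ℂ T).topologicalClosure.idealizer := by
  set G := opMulSet M (opAdjSet M)
  have hGTG : opMulSet G (opMulSet T G) ⊆ cSpan T := by
    simp only [G, Set.subset_def, forall_mem_opMulSet, forall_mem_opAdjSet]
    intro m hm m' hm' t ht n hn n' hn'
    have hs : adjoint m' ∘L (t ∘L n) ∈ cSpan S :=
      hS (comp_mem_opMulSet (adjoint_mem_opAdjSet hm') (comp_mem_opMulSet ht hn))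
    have hmsn := comp_mem_cSpan_opMulSet (subset_cSpan M hm)
      (comp_mem_cSpan_opMulSet hs (subset_cSpan _ (adjoint_mem_opAdjSet hn')))
    simpa only [comp_assoc] using cSpan_subset_cSpan hT hmsn
  have hGTG_cSpan : opMulSet (cSpan G) (opMulSet (cSpan T) (cSpan G)) ⊆ cSpan T :=
    subset_cSpan_trans
      (opMulSet_subset_cSpan subset_rfl (opMulSet_subset_cSpan subset_rfl subset_rfl)) hGTG
  refine fun g hg t ht => ⟨show g ∘L t ∈ cSpan T from ?_, show t ∘L g ∈ cSpan T from ?_⟩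
  · simpa only [one_def, comp_id] using
      hGTG_cSpan (comp_mem_opMulSet (subset_cSpan G hg) (comp_mem_opMulSet ht h1))
  · simpa only [one_def, id_comp] using
      hGTG_cSpan (comp_mem_opMulSet h1 (comp_mem_opMulSet ht (subset_cSpan G hg)))


variable {A : Set (K →L[ℂ] L)} {B : Set (H →L[ℂ] K)} {D : NonUnitalStarSubalgebra ℂ (K →L[ℂ] K)}

lemma ternary_mem_opMulSet_opMulSet (hAA : opMulSet (opAdjSet A) A ⊆ D)
    (hBB : opMulSet B (opAdjSet B) ⊆ D) :
    ∀ x ∈ opMulSet A (opMulSet (D : Set (K →L[ℂ] K)) B),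
    ∀ y ∈ opMulSet A (opMulSet (D : Set (K →L[ℂ] K)) B),
    ∀ z ∈ opMulSet A (opMulSet (D : Set (K →L[ℂ] K)) B),
      x ∘L adjoint y ∘L z ∈ opMulSet A (opMulSet (D : Set (K →L[ℂ] K)) B) := by
  simp only [forall_mem_opMulSet]
  intro p hp d hd q hq p' hp' d' hd' q' hq' p'' hp'' d'' hd'' q'' hq''
  have hmid : d * (q ∘L adjoint q') * star d' * (adjoint p' ∘L p'') * d'' ∈ D :=
    mul_mem (mul_mem (mul_mem
      (mul_mem hd (hBB (comp_mem_opMulSet hq (adjoint_mem_opAdjSet hq')))) (star_mem hd'))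
      (hAA (comp_mem_opMulSet (adjoint_mem_opAdjSet hp') hp''))) hd''
  convert comp_mem_opMulSet hp (comp_mem_opMulSet hmid hq'') using 1
  simp only [mul_def, star_eq_adjoint, adjoint_comp, comp_assoc]

lemma one_mem_cSpan_opMulSet_opAdjSet_of_subset (hB1 : 1 ∈ cSpan (opMulSet (opAdjSet B) B))
    (hB2 : 1 ∈ cSpan (opMulSet B (opAdjSet B))) (hA : 1 ∈ cSpan (opMulSet (opAdjSet A) A))
    (hBB : opMulSet B (opAdjSet B) ⊆ D) {Y : Set (H →L[ℂ] L)}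
    (hY : opMulSet A (opMulSet (D : Set (K →L[ℂ] K)) B) ⊆ Y) :
    1 ∈ cSpan (opMulSet (opAdjSet Y) Y) := by
  -- `q* (b b'*) (a* a') (c c'*) q' = (a (b' b*) q)* (a' (c c'*) q')`
  set W := opMulSet (opMulSet B (opAdjSet B))
    (opMulSet (opMulSet (opAdjSet A) A) (opMulSet B (opAdjSet B)))
  have hW : 1 ∈ cSpan W := one_mem_cSpan_opMulSet hB2 (one_mem_cSpan_opMulSet hA hB2)
  have hBWB : opMulSet (opAdjSet B) (opMulSet W B) ⊆ opMulSet (opAdjSet Y) Y := by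
    simp only [W, Set.subset_def, forall_mem_opMulSet, forall_mem_opAdjSet]
    intro q hq b hb b' hb' a ha a' ha' c hc c' hc' q' hq'
    have hx := hY (comp_mem_opMulSet ha (comp_mem_opMulSet
      (hBB (comp_mem_opMulSet hb' (adjoint_mem_opAdjSet hb))) hq))
    have hy := hY (comp_mem_opMulSet ha' (comp_mem_opMulSet
      (hBB (comp_mem_opMulSet hc (adjoint_mem_opAdjSet hc'))) hq'))
    convert comp_mem_opMulSet (adjoint_mem_opAdjSet hx) hy using 1
    simp only [adjoint_comp, adjoint_adjoint, comp_assoc]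
  exact cSpan_subset_cSpan (subset_cSpan_trans (opMulSet_subset_cSpan (subset_cSpan _)
    (subset_cSpan_opMulSet_left hW B)) (hBWB.trans (subset_cSpan _))) hB1

lemma opMulSet_opAdjSet_opMulSet_subset_cSpan {R : Set (L →L[ℂ] L)} {T : Set (K →L[ℂ] K)}
    {S : Set (H →L[ℂ] H)} (hA : opMulSet (opAdjSet A) (opMulSet R A) ⊆ cSpan T)
    (hB : opMulSet (opAdjSet B) (opMulSet T B) ⊆ cSpan S)
    (hD : (D : Set (K →L[ℂ] K)) ⊆ (Submodule.span ℂ T).topologicalClosure.idealizer)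
    {Y : Set (H →L[ℂ] L)} (hY : Y ⊆ cSpan (opMulSet A (opMulSet (D : Set (K →L[ℂ] K)) B))) :
    opMulSet (opAdjSet Y) (opMulSet R Y) ⊆ cSpan S := by
  refine subset_cSpan_trans (opMulSet_subset_cSpan (opAdjSet_subset_cSpan hY)
    (opMulSet_subset_cSpan (subset_cSpan R) hY)) ?_
  simp only [Set.subset_def, opAdjSet_opMulSet, forall_mem_opMulSet, forall_mem_opAdjSet]
  intro q hq d hd p hp r hr p' hp' d' hd' q' hq'
  have ht : adjoint p ∘L (r ∘L p') ∈ cSpan T :=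
    hA (comp_mem_opMulSet (adjoint_mem_opAdjSet hp) (comp_mem_opMulSet hr hp'))
  have hdtd : star d * (adjoint p ∘L (r ∘L p')) * d' ∈ cSpan T :=
    (hD hd' _ (hD (star_mem (s := D) hd) _ ht).1).2
  convert cSpan_subset_cSpan hB
    (comp_mem_cSpan_opMulSet (subset_cSpan _ (adjoint_mem_opAdjSet hq))
      (comp_mem_cSpan_opMulSet hdtd (subset_cSpan B hq'))) using 1
  simp only [mul_def, star_eq_adjoint, comp_assoc]

lemma adjoin_subset_idealizer_cSpan {M₁ : Set (H →L[ℂ] K)} {M₂ : Set (K →L[ℂ] L)}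
    {S : Set (H →L[ℂ] H)} {T : Set (K →L[ℂ] K)} {R : Set (L →L[ℂ] L)}
    (hM₁S : opMulSet (opAdjSet M₁) (opMulSet T M₁) ⊆ cSpan S)
    (hM₁T : opMulSet M₁ (opMulSet S (opAdjSet M₁)) ⊆ cSpan T)
    (hM₁ : 1 ∈ cSpan (opMulSet M₁ (opAdjSet M₁)))
    (hM₂T : opMulSet (opAdjSet M₂) (opMulSet R M₂) ⊆ cSpan T)
    (hM₂R : opMulSet M₂ (opMulSet T (opAdjSet M₂)) ⊆ cSpan R)
    (hM₂ : 1 ∈ cSpan (opMulSet (opAdjSet M₂) M₂)) :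
    (NonUnitalStarAlgebra.adjoin ℂ (opMulSet M₁ (opAdjSet M₁) ∪ opMulSet (opAdjSet M₂) M₂) :
      Set (K →L[ℂ] K)) ⊆ (Submodule.span ℂ T).topologicalClosure.idealizer := by
  have hG₂ := opMulSet_opAdjSet_subset_idealizer (M := opAdjSet M₂) (S := R)
    (by rwa [opAdjSet_opAdjSet]) (by rwa [opAdjSet_opAdjSet]) (by rwa [opAdjSet_opAdjSet])
  rw [opAdjSet_opAdjSet] at hG₂
  have hG := Set.union_subset (opMulSet_opAdjSet_subset_idealizer hM₁S hM₁T hM₁) hG₂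
  have hstar : star (opMulSet M₁ (opAdjSet M₁) ∪ opMulSet (opAdjSet M₂) M₂) =
      opMulSet M₁ (opAdjSet M₁) ∪ opMulSet (opAdjSet M₂) M₂ := by
    simp only [Set.union_star, star_eq_opAdjSet, opAdjSet_opMulSet, opAdjSet_opAdjSet]
  exact NonUnitalStarAlgebra.adjoin_subset hG (by rwa [hstar])

end TernaryRings

theorem stmt_4_general {H K L : Type*} [NormedAddCommGroup H] [InnerProductSpace ℂ H] [CompleteSpace H]
    [NormedAddCommGroup K] [InnerProductSpace ℂ K] [CompleteSpace K]
    [NormedAddCommGroup L] [InnerProductSpace ℂ L] [CompleteSpace L]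
    (S : Submodule ℂ (H →L[ℂ] H))
    (T : Submodule ℂ (K →L[ℂ] K))
    (R : Submodule ℂ (L →L[ℂ] L))
    (M₁ : Submodule ℂ (H →L[ℂ] K))
    (hM₁nd1 : (1 : H →L[ℂ] H) ∈
      cSpan (opMulSet (opAdjSet (M₁ : Set (H →L[ℂ] K))) (M₁ : Set (H →L[ℂ] K))))
    (hM₁nd2 : (1 : K →L[ℂ] K) ∈
      cSpan (opMulSet (M₁ : Set (H →L[ℂ] K)) (opAdjSet (M₁ : Set (H →L[ℂ] K)))))
    (hM₁S : opMulSet (opAdjSet (M₁ : Set (H →L[ℂ] K)))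
        (opMulSet (T : Set (K →L[ℂ] K)) (M₁ : Set (H →L[ℂ] K)))
      ⊆ closure (S : Set (H →L[ℂ] H)))
    (hM₁T : opMulSet (M₁ : Set (H →L[ℂ] K))
        (opMulSet (S : Set (H →L[ℂ] H)) (opAdjSet (M₁ : Set (H →L[ℂ] K))))
      ⊆ closure (T : Set (K →L[ℂ] K)))
    (M₂ : Submodule ℂ (K →L[ℂ] L))
    (hM₂nd1 : (1 : K →L[ℂ] K) ∈
      cSpan (opMulSet (opAdjSet (M₂ : Set (K →L[ℂ] L))) (M₂ : Set (K →L[ℂ] L))))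
    (hM₂nd2 : (1 : L →L[ℂ] L) ∈
      cSpan (opMulSet (M₂ : Set (K →L[ℂ] L)) (opAdjSet (M₂ : Set (K →L[ℂ] L)))))
    (hM₂T : opMulSet (opAdjSet (M₂ : Set (K →L[ℂ] L)))
        (opMulSet (R : Set (L →L[ℂ] L)) (M₂ : Set (K →L[ℂ] L)))
      ⊆ closure (T : Set (K →L[ℂ] K)))
    (hM₂R : opMulSet (M₂ : Set (K →L[ℂ] L))
        (opMulSet (T : Set (K →L[ℂ] K)) (opAdjSet (M₂ : Set (K →L[ℂ] L))))
      ⊆ closure (R : Set (L →L[ℂ] L)))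
    (D : Set (K →L[ℂ] K))
    (hD : D = ((NonUnitalStarAlgebra.adjoin ℂ
        ((opMulSet (M₁ : Set (H →L[ℂ] K)) (opAdjSet (M₁ : Set (H →L[ℂ] K)))) ∪
          (opMulSet (opAdjSet (M₂ : Set (K →L[ℂ] L))) (M₂ : Set (K →L[ℂ] L)))) :
        NonUnitalStarSubalgebra ℂ (K →L[ℂ] K)) : Set (K →L[ℂ] K)))
    (M₃ : Set (H →L[ℂ] L))
    (hM₃ : M₃ = cSpan (opMulSet (M₂ : Set (K →L[ℂ] L)) (opMulSet D (M₁ : Set (H →L[ℂ] K))))) :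
    (∀ a ∈ M₃, ∀ b ∈ M₃, ∀ c ∈ M₃, a ∘L adjoint b ∘L c ∈ M₃) ∧
    (1 : H →L[ℂ] H) ∈ cSpan (opMulSet (opAdjSet M₃) M₃) ∧
    (1 : L →L[ℂ] L) ∈ cSpan (opMulSet M₃ (opAdjSet M₃)) ∧
    opMulSet (opAdjSet M₃) (opMulSet (R : Set (L →L[ℂ] L)) M₃)
      ⊆ closure (S : Set (H →L[ℂ] H)) ∧
    opMulSet M₃ (opMulSet (S : Set (H →L[ℂ] H)) (opAdjSet M₃))
      ⊆ closure (R : Set (L →L[ℂ] L)) := by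
  rw [← cSpan_coe] at hM₁S hM₁T hM₂T hM₂R
  rw [← cSpan_coe S, ← cSpan_coe R]
  subst hD hM₃
  set D := NonUnitalStarAlgebra.adjoin ℂ
    (opMulSet (M₁ : Set (H →L[ℂ] K)) (opAdjSet M₁) ∪
      opMulSet (opAdjSet (M₂ : Set (K →L[ℂ] L))) (M₂ : Set (K →L[ℂ] L)))
  have hDT := adjoin_subset_idealizer_cSpan hM₁S hM₁T hM₁nd2 hM₂T hM₂R hM₂nd1
  have hG₁ : opMulSet (M₁ : Set (H →L[ℂ] K)) (opAdjSet M₁) ⊆ (D : Set (K →L[ℂ] K)) :=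
    fun _ hg => NonUnitalStarAlgebra.subset_adjoin ℂ _ (Or.inl hg)
  have hG₂ : opMulSet (opAdjSet (M₂ : Set (K →L[ℂ] L))) (M₂ : Set (K →L[ℂ] L)) ⊆
      (D : Set (K →L[ℂ] K)) :=
    fun _ hg => NonUnitalStarAlgebra.subset_adjoin ℂ _ (Or.inr hg)
  -- `M₃*` is the closed span of `M₁* D M₂*`, so the conjuncts about `M₃ M₃*` are those about
  -- `M₃* M₃` for the pair `(M₂*, M₁*)` in place of `(M₁, M₂)`.
  have hadj := opAdjSet_opMulSet_opMulSet (M₂ : Set (K →L[ℂ] L)) D (M₁ : Set (H →L[ℂ] K))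
  refine ⟨cSpan_ternary_closed (ternary_mem_opMulSet_opMulSet hG₂ hG₁),
    one_mem_cSpan_opMulSet_opAdjSet_of_subset hM₁nd1 hM₁nd2 hM₂nd1 hG₁ (subset_cSpan _), ?_,
    opMulSet_opAdjSet_opMulSet_subset_cSpan hM₂T hM₁S hDT subset_rfl, ?_⟩
  · have h := one_mem_cSpan_opMulSet_opAdjSet_of_subset (A := opAdjSet (M₁ : Set (H →L[ℂ] K)))
      (B := opAdjSet (M₂ : Set (K →L[ℂ] L)))
      (by rwa [opAdjSet_opAdjSet]) (by rwa [opAdjSet_opAdjSet]) (by rwa [opAdjSet_opAdjSet])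
      (by rwa [opAdjSet_opAdjSet]) (hadj ▸ opAdjSet_mono (subset_cSpan _))
    rwa [opAdjSet_opAdjSet] at h
  · have h := opMulSet_opAdjSet_opMulSet_subset_cSpan (A := opAdjSet (M₁ : Set (H →L[ℂ] K)))
      (B := opAdjSet (M₂ : Set (K →L[ℂ] L)))
      (by rwa [opAdjSet_opAdjSet]) (by rwa [opAdjSet_opAdjSet]) hDT
      (hadj ▸ opAdjSet_subset_cSpan subset_rfl)
    rwa [opAdjSet_opAdjSet] at h

/-- Transitivity of TRO-equivalence of concrete operator systems: if `S ∼ T` via the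
non-degenerate TRO `M₁` and `T ∼ R` via the non-degenerate TRO `M₂`, then with `D` the
*-algebra generated by `M₁ M₁* ∪ M₂* M₂` and `M₃ = [M₂ D M₁]`, the space `M₃` is a
non-degenerate TRO implementing a TRO-equivalence of `S` and `R`. -/
theorem stmt_4 {H K L : Type*} [NormedAddCommGroup H] [InnerProductSpace ℂ H] [CompleteSpace H]
    [NormedAddCommGroup K] [InnerProductSpace ℂ K] [CompleteSpace K]
    [NormedAddCommGroup L] [InnerProductSpace ℂ L] [CompleteSpace L]
    (S : Submodule ℂ (H →L[ℂ] H)) (hS1 : (1 : H →L[ℂ] H) ∈ S)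
    (hSstar : ∀ s ∈ S, adjoint s ∈ S)
    (T : Submodule ℂ (K →L[ℂ] K)) (hT1 : (1 : K →L[ℂ] K) ∈ T)
    (hTstar : ∀ t ∈ T, adjoint t ∈ T)
    (R : Submodule ℂ (L →L[ℂ] L)) (hR1 : (1 : L →L[ℂ] L) ∈ R)
    (hRstar : ∀ x ∈ R, adjoint x ∈ R)
    (M₁ : Submodule ℂ (H →L[ℂ] K))
    (hM₁tro : ∀ a ∈ M₁, ∀ b ∈ M₁, ∀ c ∈ M₁, a ∘L adjoint b ∘L c ∈ M₁)
    (hM₁nd1 : (1 : H →L[ℂ] H) ∈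
      cSpan (opMulSet (opAdjSet (M₁ : Set (H →L[ℂ] K))) (M₁ : Set (H →L[ℂ] K))))
    (hM₁nd2 : (1 : K →L[ℂ] K) ∈
      cSpan (opMulSet (M₁ : Set (H →L[ℂ] K)) (opAdjSet (M₁ : Set (H →L[ℂ] K)))))
    (hM₁S : opMulSet (opAdjSet (M₁ : Set (H →L[ℂ] K)))
        (opMulSet (T : Set (K →L[ℂ] K)) (M₁ : Set (H →L[ℂ] K)))
      ⊆ closure (S : Set (H →L[ℂ] H)))
    (hM₁T : opMulSet (M₁ : Set (H →L[ℂ] K))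
        (opMulSet (S : Set (H →L[ℂ] H)) (opAdjSet (M₁ : Set (H →L[ℂ] K))))
      ⊆ closure (T : Set (K →L[ℂ] K)))
    (M₂ : Submodule ℂ (K →L[ℂ] L))
    (hM₂tro : ∀ a ∈ M₂, ∀ b ∈ M₂, ∀ c ∈ M₂, a ∘L adjoint b ∘L c ∈ M₂)
    (hM₂nd1 : (1 : K →L[ℂ] K) ∈
      cSpan (opMulSet (opAdjSet (M₂ : Set (K →L[ℂ] L))) (M₂ : Set (K →L[ℂ] L))))
    (hM₂nd2 : (1 : L →L[ℂ] L) ∈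
      cSpan (opMulSet (M₂ : Set (K →L[ℂ] L)) (opAdjSet (M₂ : Set (K →L[ℂ] L)))))
    (hM₂T : opMulSet (opAdjSet (M₂ : Set (K →L[ℂ] L)))
        (opMulSet (R : Set (L →L[ℂ] L)) (M₂ : Set (K →L[ℂ] L)))
      ⊆ closure (T : Set (K →L[ℂ] K)))
    (hM₂R : opMulSet (M₂ : Set (K →L[ℂ] L))
        (opMulSet (T : Set (K →L[ℂ] K)) (opAdjSet (M₂ : Set (K →L[ℂ] L))))
      ⊆ closure (R : Set (L →L[ℂ] L)))
    (D : Set (K →L[ℂ] K))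
    (hD : D = ((NonUnitalStarAlgebra.adjoin ℂ
        ((opMulSet (M₁ : Set (H →L[ℂ] K)) (opAdjSet (M₁ : Set (H →L[ℂ] K)))) ∪
          (opMulSet (opAdjSet (M₂ : Set (K →L[ℂ] L))) (M₂ : Set (K →L[ℂ] L)))) :
        NonUnitalStarSubalgebra ℂ (K →L[ℂ] K)) : Set (K →L[ℂ] K)))
    (M₃ : Set (H →L[ℂ] L))
    (hM₃ : M₃ = cSpan (opMulSet (M₂ : Set (K →L[ℂ] L)) (opMulSet D (M₁ : Set (H →L[ℂ] K))))) :
    (∀ a ∈ M₃, ∀ b ∈ M₃, ∀ c ∈ M₃, a ∘L adjoint b ∘L c ∈ M₃) ∧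
    (1 : H →L[ℂ] H) ∈ cSpan (opMulSet (opAdjSet M₃) M₃) ∧
    (1 : L →L[ℂ] L) ∈ cSpan (opMulSet M₃ (opAdjSet M₃)) ∧
    opMulSet (opAdjSet M₃) (opMulSet (R : Set (L →L[ℂ] L)) M₃)
      ⊆ closure (S : Set (H →L[ℂ] H)) ∧
    opMulSet M₃ (opMulSet (S : Set (H →L[ℂ] H)) (opAdjSet M₃))
      ⊆ closure (R : Set (L →L[ℂ] L)) :=
  stmt_4_general S T R M₁ hM₁nd1 hM₁nd2 hM₁S hM₁T M₂ hM₂nd1 hM₂nd2 hM₂T hM₂R D hD M₃ hM₃
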